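/- For every sequence x ∈ {1} × [n]^L, the function f_x is valid for the staircase S_x; consequently f_x has a unique local minimum, located at the last vertex of S_x. -/

import Mathlib

/-!
On the staircase `S_x`, `f_x v` is minus the position of `v` written in base `n`: the index of
the last segment through `v`, then the index of `v` inside that segment. A path has at most `n`
vertices, so this position grows with the time of the last visit of `v`, which makes `f_x`
valid. For any valid function the last vertex of the walk is a global minimum, and every other
vertex has a smaller neighbour: on the walk, the vertex following its last visit; off the walk,
the next vertex of a shortest path back to the start.
-/

open Finset
open Fin.NatCast

variable {n L : ℕ}

/-- The segment of the staircase between milestones `x i` and `x (i+1)` (`0`-based `i`),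
namely the path `P^{x_i, x_{i+1}}` of the all-pairs set of paths `P`. -/
def seg (P : Fin n → Fin n → List (Fin n)) (x : Fin (L + 1) → Fin n) (i : ℕ) :
    List (Fin n) :=
  P (x i) (x (i + 1))

/-- The staircase `S_x` induced by the milestone sequence `x` and the all-pairs set of
paths `P`: the concatenation `P^{x_1,x_2} ∘ P^{x_2,x_3} ∘ ⋯ ∘ P^{x_L,x_{L+1}}` (as a walk;
each path after the first contributes everything but its first vertex). -/
def staircase (P : Fin n → Fin n → List (Fin n)) (x : Fin (L + 1) → Fin n) :
    List (Fin n) :=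
  x 0 :: ((List.range L).flatMap fun i => (seg P x i).tail)

/-- The largest (`0`-based) segment index whose path contains `v`. -/
def segIdx (P : Fin n → Fin n → List (Fin n)) (x : Fin (L + 1) → Fin n) (v : Fin n) : ℕ :=
  ((Finset.range L).filter fun i => v ∈ seg P x i).sup id

/-- The value function `f_x`: `f_x v = dist(v, 1)` if `v` is not on the staircase `S_x`,
and `f_x v = −(i·n + j)` if `v` is on `S_x`, where `i` is the maximum (1-based) index with
`v ∈ P^{x_i,x_{i+1}}` and `v` is the `j`-th vertex of `P^{x_i,x_{i+1}}`. -/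
noncomputable def fx (G : SimpleGraph (Fin n)) (P : Fin n → Fin n → List (Fin n))
    (v₁ : Fin n) (x : Fin (L + 1) → Fin n) (v : Fin n) : ℤ :=
  if v ∈ staircase P x then
    -(((segIdx P x v : ℤ) + 1) * (n : ℤ) + (((seg P x (segIdx P x v)).idxOf v : ℤ) + 1))
  else (G.dist v v₁ : ℤ)

/-- The function `g_{x,b}`, hiding the bit `b` at the last milestone `x_{L+1}` (second
component `b ∈ {0,1}` there, `−1` elsewhere). -/
noncomputable def gx (G : SimpleGraph (Fin n)) (P : Fin n → Fin n → List (Fin n))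
    (v₁ : Fin n) (x : Fin (L + 1) → Fin n) (b : Bool) (v : Fin n) : ℤ × ℤ :=
  (fx G P v₁ x v, if v = x (Fin.last L) then (if b then 1 else 0) else -1)

/-- The maximum (1-based) index `j` such that `(x_1, …, x_j) = (y_1, …, y_j)`. -/
def maxPrefix (x y : Fin (L + 1) → Fin n) : ℕ :=
  ((Finset.Icc 1 (L + 1)).filter fun j => ∀ i : Fin (L + 1), (i : ℕ) < j → x i = y i).sup id

/-- The relation `r`: zero if the bits agree or either sequence is not good (injective),
and `n ^ maxPrefix` otherwise. -/
noncomputable def rrel (p q : (Fin (L + 1) → Fin n) × Bool) : ℝ :=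
  if p.2 = q.2 ∨ ¬ Function.Injective p.1 ∨ ¬ Function.Injective q.1 then 0
  else (n : ℝ) ^ maxPrefix p.1 q.1

/-- The relation `r_v`: equal to `r` if `g_{x,b₁}(v) ≠ g_{y,b₂}(v)` and `0` otherwise. -/
noncomputable def rv (G : SimpleGraph (Fin n)) (P : Fin n → Fin n → List (Fin n))
    (v₁ v : Fin n) (p q : (Fin (L + 1) → Fin n) × Bool) : ℝ :=
  if gx G P v₁ p.1 p.2 v ≠ gx G P v₁ q.1 q.2 v then rrel p q else 0

/-- The relation `r̃_v`: equal to `r_v` if `μ(S_x, v) ≤ μ(S_y, v)` and `0` otherwise. -/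
noncomputable def rvt (G : SimpleGraph (Fin n)) (P : Fin n → Fin n → List (Fin n))
    (v₁ v : Fin n) (p q : (Fin (L + 1) → Fin n) × Bool) : ℝ :=
  if (staircase P p.1).count v ≤ (staircase P q.1).count v then rv G P v₁ v p q else 0

/-- `Tail(j, S_x)` for a 1-based index `j ∈ [L]`: the walk
`P^{x_j,x_{j+1}} ∘ ⋯ ∘ P^{x_L,x_{L+1}}` with the first occurrence of `x_j` removed.
For `j = L + 1` it is the empty sequence. -/
def tailWalk (P : Fin n → Fin n → List (Fin n)) (x : Fin (L + 1) → Fin n) (j : ℕ) :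
    List (Fin n) :=
  if j ≤ L then
    (seg P x (j - 1) ++ ((List.range L).drop j).flatMap fun i => (seg P x i).tail).erase
      (x (j - 1))
  else []

/-- The vertex congestion of the all-pairs set of paths `P`:
`max_{w} Σ_{u,v} (number of occurrences of w on P^{u,v})`. -/
def congestion (P : Fin n → Fin n → List (Fin n)) : ℕ :=
  Finset.univ.sup fun w => ∑ u : Fin n, ∑ v : Fin n, (P u v).count w

/-- `N_v(u)`: the number of paths in `P` that start at `u` and contain `v`. -/
def Npaths (P : Fin n → Fin n → List (Fin n)) (v u : Fin n) : ℕ :=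
  (Finset.univ.filter fun w => v ∈ P u w).card

/-- The 1-based index of the last occurrence of `v` on the list `W`. -/
def lastIdx {α : Type*} [DecidableEq α] (W : List α) (v : α) : ℕ :=
  W.length - W.reverse.idxOf v


section LastIdx

variable {α : Type*} [DecidableEq α] {A B W : List α} {v : α}

lemma lastIdx_le_length (W : List α) (v : α) : lastIdx W v ≤ W.length :=
  Nat.sub_le _ _

lemma lastIdx_pos (hv : v ∈ W) : 0 < lastIdx W v := by
  have : W.reverse.idxOf v < W.reverse.length := List.idxOf_lt_length_iff.mpr (by simpa)
  rw [lastIdx]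
  simp only [List.length_reverse] at this
  omega

lemma lastIdx_append_cons (hB : v ∉ B) : lastIdx (A ++ v :: B) v = A.length + 1 := by
  simp [lastIdx, List.idxOf_append_of_notMem (List.mem_reverse.not.mpr hB)]
  omega

lemma lastIdx_append_of_notMem (hB : v ∉ B) : lastIdx (A ++ B) v = lastIdx A v := by
  simp [lastIdx, List.idxOf_append_of_notMem (List.mem_reverse.not.mpr hB)]
  omega

lemma lastIdx_append_of_mem (hB : v ∈ B) : lastIdx (A ++ B) v = A.length + lastIdx B v := by
  have : B.reverse.idxOf v ≤ B.length := by simpa using List.idxOf_le_length (l := B.reverse)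
  simp [lastIdx, List.idxOf_append_of_mem (List.mem_reverse.mpr hB)]
  omega

lemma exists_eq_append_cons_notMem (hv : v ∈ W) : ∃ A B, W = A ++ v :: B ∧ v ∉ B := by
  obtain ⟨B, A, hB, hW, -⟩ := List.exists_erase_eq (List.mem_reverse.mpr hv)
  exact ⟨A.reverse, B.reverse, by simpa using congrArg List.reverse hW, by simpa using hB⟩

lemma List.Nodup.lastIdx_eq (hW : W.Nodup) (hv : v ∈ W) : lastIdx W v = W.idxOf v + 1 := by
  obtain ⟨A, B, rfl⟩ := List.append_of_mem hv
  have hA : v ∉ A := fun h => (List.nodup_append.mp hW).2.2 v h v List.mem_cons_self rfl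
  have hB : v ∉ B := (List.nodup_cons.mp (List.nodup_append.mp hW).2.1).1
  rw [lastIdx_append_cons hB, List.idxOf_append_of_notMem hA, List.idxOf_cons_self]

lemma lastIdx_getLast (hW : W ≠ []) : lastIdx W (W.getLast hW) = W.length := by
  have hsplit := List.dropLast_append_getLast hW
  generalize W.getLast hW = a at hsplit ⊢
  rw [← hsplit, lastIdx_append_cons List.not_mem_nil]
  simp

lemma lastIdx_lt_length (hW : W ≠ []) (hv : v ≠ W.getLast hW) : lastIdx W v < W.length := by
  conv_lhs => rw [← List.dropLast_append_getLast hW]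
  rw [lastIdx_append_of_notMem (by simpa using hv)]
  have := lastIdx_le_length W.dropLast v
  have := List.length_pos_iff.mpr hW
  rw [List.length_dropLast] at *
  omega

lemma exists_adj_lastIdx_lt {G : SimpleGraph α} (hchain : W.IsChain G.Adj) (hW : W ≠ [])
    (hv : v ∈ W) (hne : v ≠ W.getLast hW) :
    ∃ w ∈ W, G.Adj v w ∧ lastIdx W v < lastIdx W w := by
  obtain ⟨A, B, rfl, hB⟩ := exists_eq_append_cons_notMem hv
  obtain ⟨b, B, rfl⟩ : ∃ b B', B = b :: B' := by
    refine List.exists_cons_of_ne_nil ?_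
    rintro rfl
    exact hne (List.getLast_concat ..).symm
  refine ⟨b, by simp, (List.isChain_cons_cons.mp hchain.right_of_append).1, ?_⟩
  have hsplit : A ++ v :: b :: B = (A ++ [v]) ++ b :: B := by simp
  rw [lastIdx_append_cons hB, hsplit, lastIdx_append_of_mem List.mem_cons_self]
  have := lastIdx_pos (List.mem_cons_self (a := b) (l := B))
  simp only [List.length_append, List.length_singleton]
  omega

end LastIdx

lemma SimpleGraph.exists_adj_dist_lt {V : Type*} {G : SimpleGraph V} {u v : V}
    (h : G.dist u v ≠ 0) : ∃ w, G.Adj v w ∧ G.dist u w < G.dist u v := by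
  rw [SimpleGraph.dist_comm] at h ⊢
  obtain ⟨p, hp⟩ := SimpleGraph.exists_walk_of_dist_ne_zero h
  cases p with
  | nil => simp at h
  | cons hadj q =>
    refine ⟨_, hadj, ?_⟩
    rw [SimpleGraph.dist_comm]
    have := SimpleGraph.dist_le q
    rw [SimpleGraph.Walk.length_cons] at hp
    omega

section Validity

variable {V : Type*} [DecidableEq V]

def IsValidFor (G : SimpleGraph V) (W : List V) (hW : W ≠ []) (f : V → ℤ) : Prop :=
  (∀ u ∈ W, ∀ v ∈ W, lastIdx W v < lastIdx W u → f u < f v) ∧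
    (∀ v, v ∉ W → f v = (G.dist (W.head hW) v : ℤ) ∧ 0 < f v) ∧
    (∀ w ∈ W, f w ≤ 0)

variable {G : SimpleGraph V} {W : List V} {hW : W ≠ []} {f : V → ℤ}

lemma IsValidFor.getLast_le (hf : IsValidFor G W hW f) (u : V) : f (W.getLast hW) ≤ f u := by
  obtain ⟨hlt, hout, hnonpos⟩ := hf
  by_cases hu : u ∈ W
  · by_cases hlast : u = W.getLast hW
    · rw [hlast]
    · refine (hlt _ (List.getLast_mem hW) u hu ?_).le
      rw [lastIdx_getLast]
      exact lastIdx_lt_length hW hlast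
  · linarith [(hout u hu).2, hnonpos _ (List.getLast_mem hW)]

lemma IsValidFor.exists_adj_lt (hf : IsValidFor G W hW f) (hchain : W.IsChain G.Adj) (v : V)
    (hv : v ≠ W.getLast hW) : ∃ u, G.Adj v u ∧ f u < f v := by
  obtain ⟨hlt, hout, hnonpos⟩ := hf
  by_cases hvW : v ∈ W
  · obtain ⟨u, huW, hadj, hidx⟩ := exists_adj_lastIdx_lt hchain hW hvW hv
    exact ⟨u, hadj, hlt u huW v hvW hidx⟩
  · obtain ⟨hfv, hpos⟩ := hout v hvW
    obtain ⟨u, hadj, hdist⟩ :=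
      SimpleGraph.exists_adj_dist_lt (G := G) (u := W.head hW) (v := v) (by omega)
    refine ⟨u, hadj, ?_⟩
    by_cases huW : u ∈ W
    · linarith [hnonpos u huW]
    · rw [(hout u huW).1, hfv]
      exact_mod_cast hdist

end Validity

section Staircase

variable (P : Fin n → Fin n → List (Fin n)) (x : Fin (L + 1) → Fin n)

def stairPrefix (i : ℕ) : List (Fin n) :=
  x 0 :: (List.range i).flatMap fun k => (seg P x k).tail

lemma stairPrefix_add (i m : ℕ) :
    stairPrefix P x (i + m) =
      stairPrefix P x i ++ (List.range m).flatMap fun k => (seg P x (i + k)).tail := by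
  simp [stairPrefix, List.range_add, List.flatMap_append, List.flatMap_map]

lemma staircase_eq_stairPrefix : staircase P x = stairPrefix P x L := rfl

variable {P}

lemma seg_eq_cons (hhead : ∀ u v, (P u v).head? = some u) (i : ℕ) :
    x i :: (seg P x i).tail = seg P x i :=
  List.cons_head?_tail (hhead _ _)

lemma seg_eq_dropLast_append (hlast : ∀ u v, (P u v).getLast? = some v) (i : ℕ) :
    (seg P x i).dropLast ++ [x (i + 1)] = seg P x i :=
  List.dropLast_append_getLast? _ (hlast _ _)

lemma exists_stairPrefix_eq_append_seg (hhead : ∀ u v, (P u v).head? = some u)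
    (hlast : ∀ u v, (P u v).getLast? = some v) (i : ℕ) :
    ∃ A, stairPrefix P x (i + 1) = A ++ seg P x i ∧
      A.length = ∑ k ∈ range i, (seg P x k).tail.length := by
  induction i with
  | zero => exact ⟨[], by simpa [stairPrefix] using seg_eq_cons x hhead 0, rfl⟩
  | succ i ih =>
    obtain ⟨A, hA, hlen⟩ := ih
    refine ⟨A ++ (seg P x i).dropLast, ?_, ?_⟩
    · rw [stairPrefix_add P x (i + 1) 1, hA, ← seg_eq_dropLast_append x hlast i,
        ← seg_eq_cons x hhead (i + 1)]
      simp
    · simp [hlen, Finset.sum_range_succ]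

lemma staircase_eq_append_seg_append (hhead : ∀ u v, (P u v).head? = some u)
    (hlast : ∀ u v, (P u v).getLast? = some v) {i : ℕ} (hi : i < L) :
    ∃ A B, staircase P x = A ++ seg P x i ++ B ∧
      A.length = ∑ k ∈ range i, (seg P x k).tail.length ∧
      ∀ v ∈ B, ∃ k, i < k ∧ k < L ∧ v ∈ seg P x k := by
  obtain ⟨A, hA, hlen⟩ := exists_stairPrefix_eq_append_seg x hhead hlast i
  obtain ⟨m, hm⟩ : ∃ m, L = i + 1 + m := ⟨L - (i + 1), by omega⟩
  refine ⟨A, (List.range m).flatMap fun k => (seg P x (i + 1 + k)).tail, ?_, hlen, ?_⟩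
  · rw [← hA, ← stairPrefix_add, staircase_eq_stairPrefix, ← hm]
  · simp only [List.mem_flatMap, List.mem_range]
    rintro v ⟨k, hk, hv⟩
    exact ⟨i + 1 + k, by omega, by omega, List.mem_of_mem_tail hv⟩

lemma mem_staircase_iff (hhead : ∀ u v, (P u v).head? = some u)
    (hlast : ∀ u v, (P u v).getLast? = some v) (hL : 0 < L) {v : Fin n} :
    v ∈ staircase P x ↔ ∃ i < L, v ∈ seg P x i := by
  constructor
  · rintro (_ | ⟨_, hv⟩)
    · refine ⟨0, hL, ?_⟩
      rw [← seg_eq_cons x hhead 0, Nat.cast_zero]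
      exact List.mem_cons_self
    · obtain ⟨k, hk, hv⟩ := List.mem_flatMap.mp hv
      exact ⟨k, List.mem_range.mp hk, List.mem_of_mem_tail hv⟩
  · rintro ⟨i, hi, hv⟩
    obtain ⟨A, B, hS, -⟩ := staircase_eq_append_seg_append x hhead hlast hi
    simp [hS, hv]

lemma le_segIdx {v : Fin n} {k : ℕ} (hk : k < L) (hv : v ∈ seg P x k) : k ≤ segIdx P x v :=
  Finset.le_sup (f := id) (by simp [hk, hv])

lemma segIdx_lt_and_mem_seg (hhead : ∀ u v, (P u v).head? = some u)
    (hlast : ∀ u v, (P u v).getLast? = some v) (hL : 0 < L) {v : Fin n}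
    (hv : v ∈ staircase P x) : segIdx P x v < L ∧ v ∈ seg P x (segIdx P x v) := by
  obtain ⟨i, hi, hvi⟩ := (mem_staircase_iff x hhead hlast hL).mp hv
  obtain ⟨k, hk, hmax⟩ :=
    Finset.exists_mem_eq_sup ((range L).filter fun k => v ∈ seg P x k) ⟨i, by simp [hi, hvi]⟩ id
  rw [segIdx, hmax]
  simpa using hk

lemma lastIdx_staircase (hhead : ∀ u v, (P u v).head? = some u)
    (hlast : ∀ u v, (P u v).getLast? = some v) (hnodup : ∀ u v, (P u v).Nodup) (hL : 0 < L)
    {v : Fin n} (hv : v ∈ staircase P x) :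
    lastIdx (staircase P x) v = ∑ k ∈ range (segIdx P x v), (seg P x k).tail.length +
      (seg P x (segIdx P x v)).idxOf v + 1 := by
  obtain ⟨hiL, hvi⟩ := segIdx_lt_and_mem_seg x hhead hlast hL hv
  obtain ⟨A, B, hS, hlen, hB⟩ := staircase_eq_append_seg_append x hhead hlast hiL
  have hvB : v ∉ B := fun hvB => by
    obtain ⟨k, hik, hkL, hvk⟩ := hB v hvB
    exact absurd (le_segIdx x hkL hvk) (by omega)
  have hnd : (seg P x (segIdx P x v)).Nodup := hnodup _ _
  rw [hS, lastIdx_append_of_notMem hvB, lastIdx_append_of_mem hvi, hnd.lastIdx_eq hvi, hlen,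
    Nat.add_assoc]

lemma isChain_staircase (G : SimpleGraph (Fin n)) (hhead : ∀ u v, (P u v).head? = some u)
    (hlast : ∀ u v, (P u v).getLast? = some v) (hchain : ∀ u v, (P u v).IsChain G.Adj)
    (hL : 0 < L) : (staircase P x).IsChain G.Adj := by
  suffices h : ∀ i, (stairPrefix P x (i + 1)).IsChain G.Adj by
    simpa [staircase_eq_stairPrefix, Nat.sub_add_cancel hL] using h (L - 1)
  intro i
  induction i with
  | zero =>
    have h0 := seg_eq_cons x hhead 0
    rw [Nat.cast_zero] at h0
    have hseg : (seg P x 0).IsChain G.Adj := hchain _ _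
    simpa [stairPrefix, h0] using hseg
  | succ i ih =>
    obtain ⟨A, hA, -⟩ := exists_stairPrefix_eq_append_seg x hhead hlast i
    rw [hA, ← seg_eq_dropLast_append x hlast i, ← List.append_assoc] at ih
    rw [stairPrefix_add P x (i + 1) 1, hA, ← seg_eq_dropLast_append x hlast i]
    have hnext : (seg P x (i + 1)).IsChain G.Adj := hchain _ _
    rw [← seg_eq_cons x hhead (i + 1)] at hnext
    simpa using ih.append_overlap (by simpa using hnext) (List.cons_ne_nil _ _)

lemma segIdx_lt_or_of_lastIdx_lt (hhead : ∀ u v, (P u v).head? = some u)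
    (hlast : ∀ u v, (P u v).getLast? = some v) (hnodup : ∀ u v, (P u v).Nodup) (hL : 0 < L)
    {u v : Fin n} (hu : u ∈ staircase P x) (hv : v ∈ staircase P x)
    (hlt : lastIdx (staircase P x) v < lastIdx (staircase P x) u) :
    segIdx P x v < segIdx P x u ∨ segIdx P x v = segIdx P x u ∧
      (seg P x (segIdx P x v)).idxOf v < (seg P x (segIdx P x u)).idxOf u := by
  rw [lastIdx_staircase x hhead hlast hnodup hL hu,
    lastIdx_staircase x hhead hlast hnodup hL hv] at hlt
  have hju : (seg P x (segIdx P x u)).idxOf u < (seg P x (segIdx P x u)).length :=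
    List.idxOf_lt_length_iff.mpr (segIdx_lt_and_mem_seg x hhead hlast hL hu).2
  have htail := List.length_tail (l := seg P x (segIdx P x u))
  rcases lt_trichotomy (segIdx P x v) (segIdx P x u) with h | h | h
  · exact Or.inl h
  · rw [h] at hlt ⊢
    omega
  · have hsum := Finset.sum_le_sum_of_subset (f := fun k => (seg P x k).tail.length)
      (range_subset_range.mpr (Nat.succ_le_of_lt h))
    rw [sum_range_succ] at hsum
    omega

lemma fx_of_mem (G : SimpleGraph (Fin n)) (v₁ : Fin n) {v : Fin n} (hv : v ∈ staircase P x) :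
    fx G P v₁ x v =
      -(((segIdx P x v + 1) * n + (seg P x (segIdx P x v)).idxOf v + 1 : ℕ) : ℤ) := by
  rw [fx, if_pos hv]
  push_cast
  ring

lemma fx_lt_of_lastIdx_lt (G : SimpleGraph (Fin n)) (v₁ : Fin n)
    (hhead : ∀ u v, (P u v).head? = some u) (hlast : ∀ u v, (P u v).getLast? = some v)
    (hnodup : ∀ u v, (P u v).Nodup) (hL : 0 < L) {u v : Fin n} (hu : u ∈ staircase P x)
    (hv : v ∈ staircase P x) (hlt : lastIdx (staircase P x) v < lastIdx (staircase P x) u) :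
    fx G P v₁ x u < fx G P v₁ x v := by
  rw [fx_of_mem x G v₁ hu, fx_of_mem x G v₁ hv, neg_lt_neg_iff, Nat.cast_lt]
  have hnd : (seg P x (segIdx P x v)).Nodup := hnodup _ _
  have hjv : (seg P x (segIdx P x v)).idxOf v < n :=
    (List.idxOf_lt_length_iff.mpr (segIdx_lt_and_mem_seg x hhead hlast hL hv).2).trans_le
      (by simpa using hnd.length_le_card)
  rcases segIdx_lt_or_of_lastIdx_lt x hhead hlast hnodup hL hu hv hlt with h | ⟨h, hj⟩
  · calc (segIdx P x v + 1) * n + (seg P x (segIdx P x v)).idxOf v + 1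
        ≤ (segIdx P x v + 2) * n := by linarith
      _ ≤ (segIdx P x u + 1) * n := Nat.mul_le_mul_right n (by omega)
      _ < _ := by omega
  · rw [h] at hjv hj ⊢
    omega

theorem isValidFor_fx (hn : 0 < n) (hL : 0 < L) (G : SimpleGraph (Fin n)) (hconn : G.Connected)
    (hhead : ∀ u v, (P u v).head? = some u) (hlast : ∀ u v, (P u v).getLast? = some v)
    (hnodup : ∀ u v, (P u v).Nodup) (hx0 : x 0 = ⟨0, hn⟩) (hSne : staircase P x ≠ []) :
    IsValidFor G (staircase P x) hSne (fx G P ⟨0, hn⟩ x) := by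
  refine ⟨fun u hu v hv hlt => fx_lt_of_lastIdx_lt x G _ hhead hlast hnodup hL hu hv hlt,
    fun v hv => ?_, fun w hw => ?_⟩
  · have hne : v ≠ ⟨0, hn⟩ := by
      rintro rfl
      exact hv (hx0 ▸ List.mem_cons_self)
    have hhead_eq : (staircase P x).head hSne = ⟨0, hn⟩ := hx0
    rw [fx, if_neg hv, hhead_eq, SimpleGraph.dist_comm]
    exact ⟨rfl, by exact_mod_cast hconn.pos_dist_of_ne hne.symm⟩
  · rw [fx_of_mem x G _ hw]
    exact neg_nonpos.mpr (Nat.cast_nonneg _)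

end Staircase

theorem stmt2_general (hn : 0 < n) (hL : 0 < L)
    (G : SimpleGraph (Fin n)) (hconn : G.Connected)
    (P : Fin n → Fin n → List (Fin n))
    (hhead : ∀ u v, (P u v).head? = some u)
    (hlast : ∀ u v, (P u v).getLast? = some v)
    (hchain : ∀ u v, (P u v).Chain' G.Adj)
    (hnodup : ∀ u v, (P u v).Nodup)
    (x : Fin (L + 1) → Fin n) (hx0 : x 0 = ⟨0, hn⟩)
    (hSne : staircase P x ≠ []) :
    -- `f_x` is valid for the staircase `S_x`:
    ((∀ u ∈ staircase P x, ∀ v ∈ staircase P x,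
        lastIdx (staircase P x) v < lastIdx (staircase P x) u →
          fx G P ⟨0, hn⟩ x u < fx G P ⟨0, hn⟩ x v) ∧
      (∀ v, v ∉ staircase P x →
        fx G P ⟨0, hn⟩ x v = (G.dist ((staircase P x).head hSne) v : ℤ) ∧
          0 < fx G P ⟨0, hn⟩ x v) ∧
      (∀ w ∈ staircase P x, fx G P ⟨0, hn⟩ x w ≤ 0)) ∧
    -- consequently, `f_x` has a unique local minimum at the last vertex of `S_x`:
    ((∀ u, G.Adj ((staircase P x).getLast hSne) u →
        fx G P ⟨0, hn⟩ x ((staircase P x).getLast hSne) ≤ fx G P ⟨0, hn⟩ x u) ∧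
      (∀ v, v ≠ (staircase P x).getLast hSne →
        ∃ u, G.Adj v u ∧ fx G P ⟨0, hn⟩ x u < fx G P ⟨0, hn⟩ x v)) := by
  have hvalid := isValidFor_fx x hn hL G hconn hhead hlast hnodup hx0 hSne
  exact ⟨hvalid, fun u _ => hvalid.getLast_le u,
    hvalid.exists_adj_lt (isChain_staircase x G hhead hlast hchain hL)⟩

/-- For every sequence `x ∈ {1} × [n]^L`, the function `f_x` is valid for
the staircase `S_x`; consequently `f_x` has a unique local minimum, located at the last
vertex of `S_x`. -/
theorem stmt2 (hn : 0 < n) (hL : 0 < L)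
    (G : SimpleGraph (Fin n)) (hconn : G.Connected)
    (P : Fin n → Fin n → List (Fin n))
    (hhead : ∀ u v, (P u v).head? = some u)
    (hlast : ∀ u v, (P u v).getLast? = some v)
    (hchain : ∀ u v, (P u v).Chain' G.Adj)
    (hnodup : ∀ u v, (P u v).Nodup)
    (hself : ∀ u, P u u = [u])
    (x : Fin (L + 1) → Fin n) (hx0 : x 0 = ⟨0, hn⟩)
    (hSne : staircase P x ≠ []) :
    -- `f_x` is valid for the staircase `S_x`:
    ((∀ u ∈ staircase P x, ∀ v ∈ staircase P x,
        lastIdx (staircase P x) v < lastIdx (staircase P x) u →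
          fx G P ⟨0, hn⟩ x u < fx G P ⟨0, hn⟩ x v) ∧
      (∀ v, v ∉ staircase P x →
        fx G P ⟨0, hn⟩ x v = (G.dist ((staircase P x).head hSne) v : ℤ) ∧
          0 < fx G P ⟨0, hn⟩ x v) ∧
      (∀ w ∈ staircase P x, fx G P ⟨0, hn⟩ x w ≤ 0)) ∧
    -- consequently, `f_x` has a unique local minimum at the last vertex of `S_x`:
    ((∀ u, G.Adj ((staircase P x).getLast hSne) u →
        fx G P ⟨0, hn⟩ x ((staircase P x).getLast hSne) ≤ fx G P ⟨0, hn⟩ x u) ∧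
      (∀ v, v ≠ (staircase P x).getLast hSne →
        ∃ u, G.Adj v u ∧ fx G P ⟨0, hn⟩ x u < fx G P ⟨0, hn⟩ x v)) :=
  stmt2_general hn hL G hconn P hhead hlast hchain hnodup x hx0 hSne
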